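/- arXiv:2210.10823 — 2 statements merged into one kernel-verified Lean document; each statement's English description precedes it below -/
import Mathlib

section
/- Let H be a Hilbert space, ξ ∈ H a vector, X a nonempty set, and f: X → H a map. The following are equivalent: (1) for every η ∈ H there exists x ∈ X such that ‖f(x) − ξ‖ ≤ ‖f(x) − η‖; (2) ξ belongs to the closure (in the norm topology) of the convex hull of {f(x) : x ∈ X}. -/
open scoped InnerProductSpace

/-!
`‖z - ξ‖ ≤ ‖z - η‖` cuts out a closed half-space in `z` (the whole space when `η = ξ`), so if it
holds on the range of `f` it holds on the closed convex hull `K`; taking `z = ξ ∈ K` forces `η = ξ`.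
Conversely, if `ξ ∉ K`, the nearest point `p` of `K` to `ξ` satisfies `⟪ξ - p, k - p⟫ ≤ 0` on `K`,
hence `‖k - p‖² ≤ ‖k - ξ‖² - ‖ξ - p‖² < ‖k - ξ‖²`, and `η = p` violates (1).
-/

section RealInnerProductSpace

variable {E : Type*} [NormedAddCommGroup E] [InnerProductSpace ℝ E]

theorem norm_sub_le_norm_sub_iff_inner (z a b : E) :
    ‖z - a‖ ≤ ‖z - b‖ ↔ 2 * ⟪b - a, z⟫_ℝ ≤ ‖b‖ ^ 2 - ‖a‖ ^ 2 := by
  rw [← pow_le_pow_iff_left₀ (norm_nonneg _) (norm_nonneg _) two_ne_zero,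
    norm_sub_sq_real, norm_sub_sq_real, inner_sub_left, real_inner_comm a, real_inner_comm b]
  constructor <;> intro h <;> linarith

theorem convex_setOf_norm_sub_le_norm_sub (a b : E) :
    Convex ℝ {z : E | ‖z - a‖ ≤ ‖z - b‖} := by
  simp_rw [norm_sub_le_norm_sub_iff_inner]
  exact convex_halfSpace_le ((2 : ℝ) • innerₗ E (b - a)).isLinear _

theorem norm_sub_le_norm_sub_of_mem_closure_convexHull {s : Set E} {a b y : E}
    (hs : ∀ z ∈ s, ‖z - a‖ ≤ ‖z - b‖) (hy : y ∈ closure (convexHull ℝ s)) :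
    ‖y - a‖ ≤ ‖y - b‖ :=
  closure_minimal (convexHull_min hs (convex_setOf_norm_sub_le_norm_sub a b))
    (isClosed_le (continuous_id.sub continuous_const).norm
      (continuous_id.sub continuous_const).norm) hy

theorem exists_forall_norm_sub_lt_of_notMem {K : Set E} (hne : K.Nonempty)
    (hcomplete : IsComplete K) (hconvex : Convex ℝ K) {ξ : E} (hξ : ξ ∉ K) :
    ∃ η, ∀ k ∈ K, ‖k - η‖ < ‖k - ξ‖ := by
  obtain ⟨p, hpK, hp⟩ := exists_norm_eq_iInf_of_complete_convex hne hcomplete hconvex ξ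
  have hobtuse := (norm_eq_iInf_iff_real_inner_le_zero hconvex hpK).1 hp
  have hξp : 0 < ‖ξ - p‖ := norm_pos_iff.2 (sub_ne_zero.2 fun h ↦ hξ (h ▸ hpK))
  refine ⟨p, fun k hk ↦ ?_⟩
  have hexpand : ‖k - ξ‖ ^ 2 = ‖k - p‖ ^ 2 - 2 * ⟪ξ - p, k - p⟫_ℝ + ‖ξ - p‖ ^ 2 := by
    rw [real_inner_comm, ← norm_sub_sq_real, sub_sub_sub_cancel_right]
  refine lt_of_pow_lt_pow_left₀ 2 (norm_nonneg _) ?_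
  nlinarith [hobtuse k hk]

end RealInnerProductSpace

theorem stmt_3_general {H : Type*} [NormedAddCommGroup H] [InnerProductSpace ℂ H] [CompleteSpace H]
    {X : Type*} (ξ : H) (f : X → H) :
    (∀ η : H, ∃ x : X, ‖f x - ξ‖ ≤ ‖f x - η‖) ↔
      ξ ∈ closure (convexHull ℝ (Set.range f)) := by
  let _ : InnerProductSpace ℝ H := InnerProductSpace.complexToReal
  constructor
  · intro h
    obtain ⟨x₀, -⟩ := h ξ
    by_contra hξ
    obtain ⟨η, hη⟩ := exists_forall_norm_sub_lt_of_notMem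
      (Set.Nonempty.convexHull (s := Set.range f) ⟨f x₀, x₀, rfl⟩).closure
      isClosed_closure.isComplete (convex_convexHull ℝ _).closure hξ
    obtain ⟨x, hx⟩ := h η
    exact (hη (f x) (subset_closure (subset_convexHull ℝ _ ⟨x, rfl⟩))).not_ge hx
  · intro hξ η
    obtain ⟨x₀⟩ : Nonempty X := Set.range_nonempty_iff_nonempty.1 <|
      convexHull_nonempty_iff.1 <| closure_nonempty_iff.1 ⟨ξ, hξ⟩
    by_contra! hcloser
    have hξη : ‖ξ - η‖ ≤ ‖ξ - ξ‖ := norm_sub_le_norm_sub_of_mem_closure_convexHull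
      (by rintro _ ⟨x, rfl⟩; exact (hcloser x).le) hξ
    have hηξ : η = ξ := by
      rw [sub_self, norm_zero, norm_le_zero_iff, sub_eq_zero] at hξη
      exact hξη.symm
    exact (hcloser x₀).ne (by rw [hηξ])

/-- Let `H` be a (complex) Hilbert space, `ξ ∈ H`, `X` a nonempty set and
`f : X → H`. Then (1) for every `η ∈ H` there is `x ∈ X` with `‖f x - ξ‖ ≤ ‖f x - η‖`
iff (2) `ξ` lies in the norm closure of the convex hull of the range of `f`. -/
theorem stmt_3 {H : Type*} [NormedAddCommGroup H] [InnerProductSpace ℂ H] [CompleteSpace H]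
    {X : Type*} [Nonempty X] (ξ : H) (f : X → H) :
    (∀ η : H, ∃ x : X, ‖f x - ξ‖ ≤ ‖f x - η‖) ↔
      ξ ∈ closure (convexHull ℝ (Set.range f)) :=
  stmt_3_general ξ f
end

section
/- Let G be a countable discrete group. Suppose that for every finite family of bounded functions f_1,…,f_n: G → ℂ there exists a state τ^{f_1,…,f_n} on ℓ∞(G) such that each function x ↦ τ^{f_1,…,f_n}_y( f_i(xy) · conj(f_i(y)) ) is positive definite on G. Then there exists a single state τ on ℓ∞(G) such that for EVERY bounded function f: G → ℂ, the function x ↦ τ_y( f(xy) · conj(f(y)) ) is positive definite on G. -/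
open scoped ComplexOrder

/-- `f : G → ℂ` is bounded, i.e. `f ∈ ℓ∞(G)`. -/
def IsBddFun {G : Type*} (f : G → ℂ) : Prop := ∃ C : ℝ, ∀ x, ‖f x‖ ≤ C

/-- A state on `ℓ∞(G)`: a positive unital linear functional, encoded as a functional on
all functions `G → ℂ` whose linearity, positivity and unitality are imposed on bounded
functions. -/
structure LinftyState (G : Type*) where
  toFun : (G → ℂ) → ℂ
  map_add : ∀ f g : G → ℂ, IsBddFun f → IsBddFun g → toFun (f + g) = toFun f + toFun g
  map_smul : ∀ (c : ℂ) (f : G → ℂ), IsBddFun f → toFun (c • f) = c * toFun f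
  pos : ∀ f : G → ℂ, IsBddFun f → (∀ x, 0 ≤ f x) → 0 ≤ toFun f
  unital : toFun (fun _ => (1 : ℂ)) = 1

/-- A function `ψ : G → ℂ` is positive definite. -/
def PosDefFun {G : Type*} [Group G] (ψ : G → ℂ) : Prop :=
  ∀ (n : ℕ) (x : Fin n → G) (c : Fin n → ℂ),
    0 ≤ ∑ i, ∑ j, (starRingEnd ℂ) (c i) * c j * ψ ((x i)⁻¹ * x j)

/-- A finitely supported probability measure on `G`. -/
structure FinProb (G : Type*) where
  w : G →₀ ℝ
  nonneg : ∀ y, 0 ≤ w y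
  sum_one : w.sum (fun _ r => r) = 1

/-!
The states on `ℓ∞(G)` form a weak-* compact set: along an ultrafilter every bounded family
of values `τᵢ(g)` converges, and the pointwise limit is again a state. Take the states
`τ^S` given for the finite sets `S` of bounded functions, and let `τ` be their limit along an
ultrafilter refining the directed order on those finite sets. Each bounded `f` eventually lies
in `S`, so `x ↦ τ_y(f(xy) conj(f(y)))` is a pointwise limit of positive definite functions,
and positive definiteness is a closed condition.
-/

open Filter Topology

namespace IsBddFun

variable {G : Type*} {f g : G → ℂ}

theorem exists_nonneg_bound (hf : IsBddFun f) : ∃ C, 0 ≤ C ∧ ∀ x, ‖f x‖ ≤ C := by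
  obtain ⟨C, hC⟩ := hf
  exact ⟨max C 0, le_max_right _ _, fun x => (hC x).trans (le_max_left _ _)⟩

theorem const (c : ℂ) : IsBddFun (fun _ : G => c) := ⟨‖c‖, fun _ => le_rfl⟩

theorem add (hf : IsBddFun f) (hg : IsBddFun g) : IsBddFun (f + g) := by
  obtain ⟨C, hC⟩ := hf
  obtain ⟨D, hD⟩ := hg
  exact ⟨C + D, fun x => (norm_add_le _ _).trans (add_le_add (hC x) (hD x))⟩

theorem sub (hf : IsBddFun f) (hg : IsBddFun g) : IsBddFun (f - g) := by
  obtain ⟨C, hC⟩ := hf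
  obtain ⟨D, hD⟩ := hg
  exact ⟨C + D, fun x => (norm_sub_le _ _).trans (add_le_add (hC x) (hD x))⟩

theorem const_smul (c : ℂ) (hf : IsBddFun f) : IsBddFun (c • f) := by
  obtain ⟨C, hC⟩ := hf
  refine ⟨‖c‖ * C, fun x => ?_⟩
  rw [Pi.smul_apply, smul_eq_mul, norm_mul]
  exact mul_le_mul_of_nonneg_left (hC x) (norm_nonneg c)

theorem mul (hf : IsBddFun f) (hg : IsBddFun g) : IsBddFun (fun x => f x * g x) := by
  obtain ⟨C, hC0, hC⟩ := hf.exists_nonneg_bound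
  obtain ⟨D, hD⟩ := hg
  refine ⟨C * D, fun x => ?_⟩
  rw [norm_mul]
  exact mul_le_mul (hC x) (hD x) (norm_nonneg _) hC0

theorem comp {H : Type*} (hf : IsBddFun f) (φ : H → G) : IsBddFun (f ∘ φ) := by
  obtain ⟨C, hC⟩ := hf
  exact ⟨C, fun x => hC (φ x)⟩

theorem conj (hf : IsBddFun f) : IsBddFun (fun x => starRingEnd ℂ (f x)) := by
  obtain ⟨C, hC⟩ := hf
  exact ⟨C, fun x => by simpa using hC x⟩

theorem ofReal {u : G → ℝ} {C : ℝ} (hu : ∀ x, |u x| ≤ C) : IsBddFun (fun x => (u x : ℂ)) :=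
  ⟨C, fun x => by simpa using hu x⟩

end IsBddFun

namespace LinftyState

variable {G : Type*}

def autocorr [Mul G] (τ : LinftyState G) (f : G → ℂ) : G → ℂ :=
  fun x => τ.toFun (fun y => f (x * y) * starRingEnd ℂ (f y))

variable (τ : LinftyState G)

theorem map_const (c : ℂ) : τ.toFun (fun _ => c) = c := by
  have h := τ.map_smul c (fun _ => 1) (.const 1)
  rwa [show (c • fun _ : G => (1 : ℂ)) = fun _ => c by ext; simp, τ.unital, mul_one] at h

theorem map_sub {f g : G → ℂ} (hf : IsBddFun f) (hg : IsBddFun g) :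
    τ.toFun (f - g) = τ.toFun f - τ.toFun g := by
  rw [sub_eq_add_neg, ← neg_one_smul ℂ g, τ.map_add _ _ hf (hg.const_smul _),
    τ.map_smul _ _ hg]
  ring

theorem mono {f g : G → ℂ} (hf : IsBddFun f) (hg : IsBddFun g) (hfg : ∀ x, f x ≤ g x) :
    τ.toFun f ≤ τ.toFun g := by
  rw [← sub_nonneg, ← τ.map_sub hg hf]
  exact τ.pos _ (hg.sub hf) fun x => sub_nonneg.mpr (hfg x)

theorem norm_map_ofReal_le {u : G → ℝ} {C : ℝ} (hu : ∀ x, |u x| ≤ C) :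
    ‖τ.toFun (fun x => (u x : ℂ))‖ ≤ C := by
  have hU := IsBddFun.ofReal hu
  have hupper : τ.toFun (fun x => (u x : ℂ)) ≤ (C : ℝ) := by
    rw [← τ.map_const ((C : ℝ) : ℂ)]
    exact τ.mono hU (.const _) fun x => Complex.real_le_real.mpr (abs_le.mp (hu x)).2
  have hlower : ((-C : ℝ) : ℂ) ≤ τ.toFun (fun x => (u x : ℂ)) := by
    rw [← τ.map_const ((-C : ℝ) : ℂ)]
    exact τ.mono (.const _) hU fun x => Complex.real_le_real.mpr (abs_le.mp (hu x)).1
  obtain ⟨hre, him⟩ := Complex.le_def.mp hupper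
  obtain ⟨hre', -⟩ := Complex.le_def.mp hlower
  rw [← Complex.abs_re_eq_norm.mpr (by simpa using him)]
  exact abs_le.mpr ⟨by simpa using hre', by simpa using hre⟩

theorem norm_map_le {g : G → ℂ} {C : ℝ} (hg : ∀ x, ‖g x‖ ≤ C) : ‖τ.toFun g‖ ≤ 2 * C := by
  have hre : ∀ x, |(g x).re| ≤ C := fun x => (Complex.abs_re_le_norm _).trans (hg x)
  have him : ∀ x, |(g x).im| ≤ C := fun x => (Complex.abs_im_le_norm _).trans (hg x)
  have hdecomp : g = (fun x => ((g x).re : ℂ)) + Complex.I • fun x => ((g x).im : ℂ) := by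
    ext x
    simpa [mul_comm] using (Complex.re_add_im (g x)).symm
  rw [hdecomp, τ.map_add _ _ (.ofReal hre) ((IsBddFun.ofReal him).const_smul _),
    τ.map_smul _ _ (.ofReal him)]
  calc _ ≤ ‖τ.toFun (fun x => ((g x).re : ℂ))‖ + ‖τ.toFun (fun x => ((g x).im : ℂ))‖ := by
        simpa using norm_add_le _ (Complex.I * τ.toFun (fun x => ((g x).im : ℂ)))
    _ ≤ C + C := add_le_add (τ.norm_map_ofReal_le hre) (τ.norm_map_ofReal_le him)
    _ = 2 * C := by ring

theorem exists_tendsto_ultrafilter {ι : Type*} (σ : ι → LinftyState G) (U : Ultrafilter ι)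
    {g : G → ℂ} (hg : IsBddFun g) : ∃ z, Tendsto (fun i => (σ i).toFun g) U (𝓝 z) := by
  obtain ⟨C, hC⟩ := hg
  obtain ⟨z, -, hz⟩ := (isCompact_closedBall (0 : ℂ) (2 * C)).ultrafilter_le_nhds'
    (U.map fun i => (σ i).toFun g)
    (mem_map.mpr (univ_mem' fun i => by simpa using (σ i).norm_map_le hC))
  exact ⟨z, hz⟩

theorem exists_forall_tendsto_ultrafilter {ι : Type*} (σ : ι → LinftyState G)
    (U : Ultrafilter ι) : ∃ τ : LinftyState G,
      ∀ g, IsBddFun g → Tendsto (fun i => (σ i).toFun g) U (𝓝 (τ.toFun g)) := by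
  choose! L hL using fun g (hg : IsBddFun g) => exists_tendsto_ultrafilter σ U hg
  refine ⟨⟨L, fun f g hf hg => ?_, fun c f hf => ?_, fun f hf hf0 => ?_, ?_⟩, hL⟩
  · exact tendsto_nhds_unique (hL _ (hf.add hg))
      (((hL f hf).add (hL g hg)).congr fun i => ((σ i).map_add f g hf hg).symm)
  · exact tendsto_nhds_unique (hL _ (hf.const_smul c))
      (((hL f hf).const_mul c).congr fun i => ((σ i).map_smul c f hf).symm)
  · exact ge_of_tendsto (hL f hf) (.of_forall fun i => (σ i).pos f hf hf0)
  · exact tendsto_nhds_unique (hL _ (.const 1))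
      (tendsto_const_nhds.congr fun i => (σ i).unital.symm)

end LinftyState

theorem PosDefFun.of_tendsto {G ι : Type*} [Group G] {l : Filter ι} [l.NeBot]
    {ψ : ι → G → ℂ} {φ : G → ℂ} (hlim : ∀ x, Tendsto (fun i => ψ i x) l (𝓝 (φ x)))
    (hψ : ∀ᶠ i in l, PosDefFun (ψ i)) : PosDefFun φ := fun n x c =>
  ge_of_tendsto (tendsto_finsetSum _ fun _ _ => tendsto_finsetSum _ fun _ _ =>
    (hlim _).const_mul _) (hψ.mono fun _ hi => hi n x c)

theorem exists_state_of_finset {G : Type*} [Group G]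
    (h : ∀ (n : ℕ) (f : Fin n → G → ℂ), (∀ i, IsBddFun (f i)) →
      ∃ τ : LinftyState G, ∀ i : Fin n, PosDefFun (τ.autocorr (f i)))
    (S : Finset {f : G → ℂ // IsBddFun f}) :
    ∃ τ : LinftyState G, ∀ p ∈ S, PosDefFun (τ.autocorr p.1) := by
  obtain ⟨τ, hτ⟩ := h S.card (fun i => (S.equivFin.symm i).1.1)
    (fun i => (S.equivFin.symm i).1.2)
  exact ⟨τ, fun p hp => by simpa using hτ (S.equivFin ⟨p, hp⟩)⟩

theorem stmt_9_general (G : Type*) [Group G]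
    (h : ∀ (n : ℕ) (f : Fin n → G → ℂ), (∀ i, IsBddFun (f i)) →
      ∃ τ : LinftyState G, ∀ i : Fin n,
        PosDefFun (fun x => τ.toFun (fun y => f i (x * y) * (starRingEnd ℂ) (f i y)))) :
    ∃ τ : LinftyState G, ∀ f : G → ℂ, IsBddFun f →
      PosDefFun (fun x => τ.toFun (fun y => f (x * y) * (starRingEnd ℂ) (f y))) := by
  choose σ hσ using exists_state_of_finset h
  let U := Ultrafilter.of (atTop : Filter (Finset {f : G → ℂ // IsBddFun f}))
  obtain ⟨τ, hτ⟩ := LinftyState.exists_forall_tendsto_ultrafilter σ U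
  refine ⟨τ, fun f hf => PosDefFun.of_tendsto (ψ := fun S => (σ S).autocorr f)
    (fun x => hτ _ ((hf.comp (x * ·)).mul hf.conj)) ?_⟩
  have hmem : ∀ᶠ S in atTop, ({⟨f, hf⟩} : Finset {f : G → ℂ // IsBddFun f}) ⊆ S :=
    eventually_ge_atTop _
  filter_upwards [Ultrafilter.of_le _ hmem] with S hS
  exact hσ S ⟨f, hf⟩ (Finset.singleton_subset_iff.mp hS)

/-- Remark 3.5 of the paper. If for every finite family of bounded
functions `f₁,…,fₙ : G → ℂ` there is a state `τ^{f₁,…,fₙ}` on `ℓ∞(G)` making each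
`x ↦ τ^{f₁,…,fₙ}_y(fᵢ(xy) conj(fᵢ(y)))` positive definite, then there is a single state `τ`
on `ℓ∞(G)` such that for every bounded `f : G → ℂ` the function
`x ↦ τ_y(f(xy) conj(f(y)))` is positive definite. -/
theorem stmt_9 (G : Type*) [Group G] [Countable G]
    (h : ∀ (n : ℕ) (f : Fin n → G → ℂ), (∀ i, IsBddFun (f i)) →
      ∃ τ : LinftyState G, ∀ i : Fin n,
        PosDefFun (fun x => τ.toFun (fun y => f i (x * y) * (starRingEnd ℂ) (f i y)))) :
    ∃ τ : LinftyState G, ∀ f : G → ℂ, IsBddFun f →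
      PosDefFun (fun x => τ.toFun (fun y => f (x * y) * (starRingEnd ℂ) (f y))) :=
  stmt_9_general G h
end
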